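/- For every pair δ ≥ ω > 0 there exists a convex body K in ℝⁿ with diameter δ and thickness ω such that sup_{u≠±v} |d_K(u)−d_K(v)|/ρ(u,v) = (δ/ω)·√(δ²−ω²). -/

import Mathlib

open scoped RealInnerProductSpace
open Metric Filter

/-- Width of `K` in direction `u`: distance between the two supporting
hyperplanes of `K` orthogonal to the unit vector `u`. -/
noncomputable def widthFn {n : ℕ} (K : Set (EuclideanSpace ℝ (Fin n)))
    (u : EuclideanSpace ℝ (Fin n)) : ℝ :=
  sSup ((fun x => ⟪x, u⟫) '' K) - sInf ((fun x => ⟪x, u⟫) '' K)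

/-- Diameter of `K` in direction `u`: maximal length of a chord of `K` parallel to `u`. -/
noncomputable def dirDiam {n : ℕ} (K : Set (EuclideanSpace ℝ (Fin n)))
    (u : EuclideanSpace ℝ (Fin n)) : ℝ :=
  sSup {d : ℝ | ∃ x ∈ K, ∃ y ∈ K, (∃ t : ℝ, x - y = t • u) ∧ d = dist x y}

/-- Projective spherical distance `ρ(u,v) = arccos |⟨u,v⟩|`. -/
noncomputable def rho {n : ℕ} (u v : EuclideanSpace ℝ (Fin n)) : ℝ :=
  Real.arccos |⟪u, v⟫|

/-- `e_K(O)`: maximal length of a chord of `K` cut by a line through `O`. -/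
noncomputable def eFn {n : ℕ} (K : Set (EuclideanSpace ℝ (Fin n)))
    (O : EuclideanSpace ℝ (Fin n)) : ℝ :=
  sSup {d : ℝ | ∃ x ∈ K, ∃ y ∈ K, Collinear ℝ ({O, x, y} : Set (EuclideanSpace ℝ (Fin n))) ∧
    d = dist x y}

/-- `s_K(u)`: maximal distance between a point of `K` in one supporting hyperplane
orthogonal to `u` and a point of `K` in the other. -/
noncomputable def sFn {n : ℕ} (K : Set (EuclideanSpace ℝ (Fin n)))
    (u : EuclideanSpace ℝ (Fin n)) : ℝ :=
  sSup {d : ℝ | ∃ A ∈ K, ∃ B ∈ K,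
    (∀ x ∈ K, ⟪x, u⟫ ≤ ⟪A, u⟫) ∧ (∀ x ∈ K, ⟪B, u⟫ ≤ ⟪x, u⟫) ∧ d = dist A B}

/-- `r_K(u)`: infimum over diametral chords `[AB]` for `u` and pairs of parallel
supporting hyperplanes `H₁ ∋ A`, `H₂ ∋ B` of the distance between `H₁` and `H₂`. -/
noncomputable def rFn {n : ℕ} (K : Set (EuclideanSpace ℝ (Fin n)))
    (u : EuclideanSpace ℝ (Fin n)) : ℝ :=
  sInf {d : ℝ | ∃ A ∈ K, ∃ B ∈ K, (∃ t : ℝ, A - B = t • u) ∧ dist A B = dirDiam K u ∧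
    ∃ v : EuclideanSpace ℝ (Fin n), ‖v‖ = 1 ∧
      (∀ x ∈ K, ⟪x, v⟫ ≤ ⟪A, v⟫) ∧ (∀ x ∈ K, ⟪B, v⟫ ≤ ⟪x, v⟫) ∧ d = ⟪A - B, v⟫}

/-!
Take for `K` the ball of diameter `δ` cut by a slab of width `ω` orthogonal to a unit vector `e`.
A chord of `K` in a unit direction `u` is at most `min δ (ω / |⟪u, e⟫|)` long, and a centred
chord attains this, so `d_K(u) = ω / cos (min (ρ(u, e)) θ₁)` with `θ₁ = arccos (ω / δ)`.
The derivative `ω sin θ / cos² θ` of `θ ↦ ω / cos θ` increases on `[0, θ₁]` up to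
`(δ / ω) √(δ² - ω²)`, and `ρ(·, e)` is `1`-Lipschitz for `ρ` (the triangle inequality for angles
passes to `ρ` after choosing signs), which gives the upper bound. Rotating `u` in a plane through
`e`, the difference quotients of `d_K` just below `θ₁` tend to that derivative.
-/

open Real InnerProductGeometry Topology

section ProjectiveDistance

variable {n : ℕ} {u v w : EuclideanSpace ℝ (Fin n)}

lemma rho_comm (u v : EuclideanSpace ℝ (Fin n)) : rho u v = rho v u := by
  rw [rho, rho, real_inner_comm]

@[simp]
lemma rho_neg_left (u v : EuclideanSpace ℝ (Fin n)) : rho (-u) v = rho u v := by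
  simp [rho, inner_neg_left]

@[simp]
lemma rho_neg_right (u v : EuclideanSpace ℝ (Fin n)) : rho u (-v) = rho u v := by
  simp [rho, inner_neg_right]

lemma rho_self (hu : ‖u‖ = 1) : rho u u = 0 := by
  simp [rho, hu]

lemma rho_le_angle (hu : ‖u‖ = 1) (hv : ‖v‖ = 1) : rho u v ≤ angle u v := by
  rw [rho, angle, hu, hv, one_mul, div_one]
  exact antitone_arccos (le_abs_self _)

lemma rho_eq_angle_or_eq_angle_neg (hu : ‖u‖ = 1) (hv : ‖v‖ = 1) :
    rho u v = angle u v ∨ rho u v = angle u (-v) := by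
  rw [rho, angle, angle, hu, norm_neg, hv, one_mul, div_one, div_one, inner_neg_right]
  rcases le_total 0 ⟪u, v⟫ with h | h
  · exact .inl (by rw [abs_of_nonneg h])
  · exact .inr (by rw [abs_of_nonpos h])

lemma rho_triangle (hu : ‖u‖ = 1) (hv : ‖v‖ = 1) (hw : ‖w‖ = 1) :
    rho u w ≤ rho u v + rho v w := by
  wlog huv : rho u v = angle u v generalizing v
  · have huv' := (rho_eq_angle_or_eq_angle_neg hu hv).resolve_left huv
    simpa using this (v := -v) (by rwa [norm_neg]) (by rwa [rho_neg_right])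
  wlog hvw : rho v w = angle v w generalizing w
  · have hvw' := (rho_eq_angle_or_eq_angle_neg hv hw).resolve_left hvw
    simpa using this (w := -w) (by rwa [norm_neg]) (by rwa [rho_neg_right])
  calc rho u w ≤ angle u w := rho_le_angle hu hw
    _ ≤ angle u v + angle v w := angle_le_angle_add_angle u v w
    _ = rho u v + rho v w := by rw [huv, hvw]

lemma abs_rho_sub_rho_le (hu : ‖u‖ = 1) (hv : ‖v‖ = 1) (hw : ‖w‖ = 1) :
    |rho u w - rho v w| ≤ rho u v := by
  rw [abs_sub_le_iff]
  constructor
  · linarith [rho_triangle hu hv hw]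
  · linarith [rho_triangle hv hu hw, rho_comm u v]

lemma rho_pos_iff (hu : ‖u‖ = 1) (hv : ‖v‖ = 1) : 0 < rho u v ↔ u ≠ v ∧ u ≠ -v := by
  refine ⟨fun h => ⟨?_, ?_⟩, fun ⟨h, h'⟩ => ?_⟩
  · rintro rfl
    rw [rho_self hu] at h
    exact h.false
  · rintro rfl
    rw [rho_neg_left, rho_self hv] at h
    exact h.false
  have h₁ : ⟪u, v⟫ < 1 := (inner_lt_one_iff_real_of_norm_eq_one hu hv).2 h
  have h₂ : -⟪u, v⟫ < 1 := by
    rw [← inner_neg_right]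
    exact (inner_lt_one_iff_real_of_norm_eq_one hu (by rwa [norm_neg])).2 h'
  exact arccos_pos.2 (abs_lt.2 ⟨by linarith, h₁⟩)

end ProjectiveDistance

section Secant

lemma hasDerivAt_div_cos (ω : ℝ) {θ : ℝ} (hθ : cos θ ≠ 0) :
    HasDerivAt (fun θ => ω / cos θ) (ω * sin θ / cos θ ^ 2) θ := by
  have h : HasDerivAt (fun θ => ω / cos θ) _ θ := (hasDerivAt_const θ ω).div (hasDerivAt_cos θ) hθ
  exact h.congr_deriv (by ring)

variable {δ ω : ℝ}

lemma sqrt_sq_sub_sq_eq (hδ : 0 < δ) : √(δ ^ 2 - ω ^ 2) = δ * √(1 - (ω / δ) ^ 2) := by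
  rw [show δ ^ 2 - ω ^ 2 = δ ^ 2 * (1 - (ω / δ) ^ 2) by field_simp, sqrt_mul (by positivity),
    sqrt_sq hδ.le]

lemma div_cos_deriv_arccos (hω : 0 < ω) (hδ : ω ≤ δ) :
    ω * sin (arccos (ω / δ)) / cos (arccos (ω / δ)) ^ 2 = δ / ω * √(δ ^ 2 - ω ^ 2) := by
  have hδ₀ : 0 < δ := hω.trans_le hδ
  rw [cos_arccos (by linarith [div_pos hω hδ₀]) ((div_le_one hδ₀).2 hδ), sin_arccos,
    sqrt_sq_sub_sq_eq hδ₀]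
  field_simp

lemma abs_div_cos_sub_le (hω : 0 < ω) (hδ : ω ≤ δ) {a b : ℝ}
    (ha : a ∈ Set.Icc 0 (arccos (ω / δ))) (hb : b ∈ Set.Icc 0 (arccos (ω / δ))) :
    |ω / cos a - ω / cos b| ≤ δ / ω * √(δ ^ 2 - ω ^ 2) * |a - b| := by
  set θ₁ := arccos (ω / δ)
  have hωδ : 0 < ω / δ := div_pos hω (hω.trans_le hδ)
  have hθ₁ : θ₁ ≤ π / 2 := arccos_le_pi_div_two.2 hωδ.le
  have hcos : ∀ θ ∈ Set.Icc 0 θ₁, cos θ₁ ≤ cos θ := fun θ hθ =>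
    cos_le_cos_of_nonneg_of_le_pi hθ.1 (by linarith [pi_pos, hθ.2]) hθ.2
  have hcos₁ : 0 < cos θ₁ := cos_pos_of_mem_Ioo ⟨by linarith [arccos_nonneg (ω / δ), pi_pos],
    arccos_lt_pi_div_two.2 hωδ⟩
  have hderiv : ∀ θ ∈ Set.Icc 0 θ₁, HasDerivWithinAt (fun θ => ω / cos θ)
      (ω * sin θ / cos θ ^ 2) (Set.Icc 0 θ₁) θ := fun θ hθ =>
    (hasDerivAt_div_cos ω (hcos₁.trans_le (hcos θ hθ)).ne').hasDerivWithinAt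
  have hbound : ∀ θ ∈ Set.Icc 0 θ₁, ‖ω * sin θ / cos θ ^ 2‖ ≤ δ / ω * √(δ ^ 2 - ω ^ 2) := by
    intro θ hθ
    have hsin₀ : 0 ≤ sin θ := sin_nonneg_of_nonneg_of_le_pi hθ.1 (by linarith [pi_pos, hθ.2])
    have hsin : sin θ ≤ sin θ₁ :=
      sin_le_sin_of_le_of_le_pi_div_two (by linarith [pi_pos, hθ.1]) hθ₁ hθ.2
    have hcosθ := hcos θ hθ
    calc ‖ω * sin θ / cos θ ^ 2‖ = ω * sin θ / cos θ ^ 2 := by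
          rw [Real.norm_eq_abs, abs_of_nonneg (by positivity)]
      _ ≤ ω * sin θ₁ / cos θ₁ ^ 2 := by have := hsin₀.trans hsin; gcongr
      _ = δ / ω * √(δ ^ 2 - ω ^ 2) := div_cos_deriv_arccos hω hδ
  simpa only [Real.norm_eq_abs] using
    (convex_Icc 0 θ₁).norm_image_sub_le_of_norm_hasDerivWithin_le hderiv hbound hb ha

lemma abs_div_cos_min_sub_le (hω : 0 < ω) (hδ : ω ≤ δ) {a b : ℝ} (ha : 0 ≤ a) (hb : 0 ≤ b) :
    |ω / cos (min a (arccos (ω / δ))) - ω / cos (min b (arccos (ω / δ)))| ≤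
      δ / ω * √(δ ^ 2 - ω ^ 2) * |a - b| := by
  have hmem : ∀ c, 0 ≤ c → min c (arccos (ω / δ)) ∈ Set.Icc 0 (arccos (ω / δ)) :=
    fun c hc => ⟨le_min hc (arccos_nonneg _), min_le_right _ _⟩
  refine (abs_div_cos_sub_le hω hδ (hmem a ha) (hmem b hb)).trans ?_
  gcongr ?_ * ?_
  · exact mul_nonneg (div_nonneg (hω.le.trans hδ) hω.le) (sqrt_nonneg _)
  simpa using abs_min_sub_min_le_max a (arccos (ω / δ)) b (arccos (ω / δ))

end Secant

lemma cos_min_arccos {a b : ℝ} (ha : a ∈ Set.Icc (-1) 1) (hb : b ∈ Set.Icc (-1) 1) :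
    cos (min (arccos a) (arccos b)) = max a b := by
  rw [← antitone_arccos.map_max, cos_arccos (ha.1.trans (le_max_left a b)) (max_le ha.2 hb.2)]

section SlabBall

variable {E : Type*} [NormedAddCommGroup E] [InnerProductSpace ℝ E] {e e' u : E} {δ ω : ℝ}

def slabBall (e : E) (δ ω : ℝ) : Set E := closedBall 0 (δ / 2) ∩ {x | |⟪x, e⟫| ≤ ω / 2}

lemma mem_slabBall {x : E} : x ∈ slabBall e δ ω ↔ ‖x‖ ≤ δ / 2 ∧ |⟪x, e⟫| ≤ ω / 2 := by
  simp [slabBall]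

lemma smul_mem_slabBall (hu : ‖u‖ = 1) {c : ℝ} (hcδ : |c| ≤ δ / 2)
    (hcω : |c| * |⟪u, e⟫| ≤ ω / 2) : c • u ∈ slabBall e δ ω := by
  rw [mem_slabBall, norm_smul, hu, mul_one, real_inner_smul_left, abs_mul]
  exact ⟨hcδ, hcω⟩

lemma closedBall_subset_slabBall (he : ‖e‖ = 1) (hδ : ω ≤ δ) :
    closedBall 0 (ω / 2) ⊆ slabBall e δ ω := by
  intro x hx
  rw [mem_closedBall_zero_iff] at hx
  refine mem_slabBall.2 ⟨hx.trans (by linarith), ?_⟩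
  calc |⟪x, e⟫| ≤ ‖x‖ * ‖e‖ := abs_real_inner_le_norm x e
    _ ≤ ω / 2 := by rwa [he, mul_one]

lemma convex_slabBall : Convex ℝ (slabBall e δ ω) := by
  refine (convex_closedBall 0 _).inter ?_
  simpa [real_inner_comm, Set.preimage, Real.dist_eq] using
    (convex_closedBall (0 : ℝ) (ω / 2)).linear_preimage (innerₛₗ ℝ e)

lemma isCompact_slabBall [ProperSpace E] : IsCompact (slabBall e δ ω) :=
  (isCompact_closedBall 0 _).inter_right (isClosed_le (by fun_prop) continuous_const)

lemma interior_slabBall_nonempty (he : ‖e‖ = 1) (hω : 0 < ω) (hδ : ω ≤ δ) :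
    (interior (slabBall e δ ω)).Nonempty :=
  ⟨0, interior_maximal (ball_subset_closedBall.trans (closedBall_subset_slabBall he hδ))
    isOpen_ball (mem_ball_self (half_pos hω))⟩

lemma diam_slabBall (he' : ‖e'‖ = 1) (hee' : ⟪e', e⟫ = 0) (hω : 0 ≤ ω) (hδ : 0 ≤ δ) :
    diam (slabBall e δ ω) = δ := by
  have hmem : ∀ c : ℝ, |c| = δ / 2 → c • e' ∈ slabBall e δ ω := fun c hc =>
    smul_mem_slabBall he' hc.le (by rw [hee', abs_zero, mul_zero]; positivity)
  have hbdd : Bornology.IsBounded (slabBall e δ ω) := isBounded_closedBall.subset Set.inter_subset_left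
  refine le_antisymm ?_ ?_
  · calc diam (slabBall e δ ω) ≤ diam (closedBall (0 : E) (δ / 2)) :=
          diam_mono Set.inter_subset_left isBounded_closedBall
      _ ≤ 2 * (δ / 2) := diam_closedBall (by positivity)
      _ = δ := by ring
  · calc δ = dist ((δ / 2) • e') ((-(δ / 2)) • e') := by
          rw [dist_eq_norm, ← sub_smul, norm_smul, he', mul_one, sub_neg_eq_add, add_halves,
            Real.norm_of_nonneg hδ]
      _ ≤ diam (slabBall e δ ω) := dist_le_diam_of_mem hbdd
          (hmem _ (abs_of_nonneg (by positivity)))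
          (hmem _ (by rw [abs_neg, abs_of_nonneg (by positivity)]))

noncomputable def rotVec (e e' : E) (θ : ℝ) : E := cos θ • e + sin θ • e'

lemma rotVec_zero : rotVec e e' 0 = e := by simp [rotVec]

lemma inner_rotVec (he : ‖e‖ = 1) (he' : ‖e'‖ = 1) (hee' : ⟪e, e'⟫ = 0) (θ φ : ℝ) :
    ⟪rotVec e e' θ, rotVec e e' φ⟫ = cos (θ - φ) := by
  simp only [rotVec, inner_add_left, inner_add_right, real_inner_smul_left, real_inner_smul_right,
    real_inner_self_eq_norm_sq, he, he', hee', real_inner_comm e e', cos_sub]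
  ring

lemma norm_rotVec (he : ‖e‖ = 1) (he' : ‖e'‖ = 1) (hee' : ⟪e, e'⟫ = 0) (θ : ℝ) :
    ‖rotVec e e' θ‖ = 1 := by
  have h := inner_rotVec he he' hee' θ θ
  rw [sub_self, cos_zero, real_inner_self_eq_norm_sq, pow_eq_one_iff_of_nonneg (norm_nonneg _) two_ne_zero] at h
  exact h

end SlabBall

section EuclideanSpace

variable {n : ℕ} {e e' u : EuclideanSpace ℝ (Fin n)} {K : Set (EuclideanSpace ℝ (Fin n))}
  {δ ω r : ℝ}

lemma le_widthFn (hK : IsCompact K) (hr : 0 ≤ r) (hball : closedBall 0 r ⊆ K) (hu : ‖u‖ = 1) :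
    2 * r ≤ widthFn K u := by
  have himg : IsCompact ((fun x => ⟪x, u⟫) '' K) := hK.image (by fun_prop)
  have hmem : ∀ c : ℝ, |c| ≤ r → c ∈ (fun x => ⟪x, u⟫) '' K := fun c hc =>
    ⟨c • u, hball (by rwa [mem_closedBall_zero_iff, norm_smul, hu, mul_one]), by
      change ⟪c • u, u⟫ = c
      rw [real_inner_smul_left, real_inner_self_eq_norm_sq, hu, one_pow, mul_one]⟩
  have hsup := le_csSup himg.bddAbove (hmem r (abs_of_nonneg hr).le)
  have hinf := csInf_le himg.bddBelow (hmem (-r) (by rw [abs_neg, abs_of_nonneg hr]))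
  rw [widthFn]
  linarith

lemma widthFn_le (hK : K.Nonempty) (h : ∀ x ∈ K, |⟪x, u⟫| ≤ r) : widthFn K u ≤ 2 * r := by
  have hsup : sSup ((fun x => ⟪x, u⟫) '' K) ≤ r :=
    csSup_le (hK.image _) (by rintro _ ⟨x, hx, rfl⟩; exact (abs_le.1 (h x hx)).2)
  have hinf : -r ≤ sInf ((fun x => ⟪x, u⟫) '' K) :=
    le_csInf (hK.image _) (by rintro _ ⟨x, hx, rfl⟩; exact (abs_le.1 (h x hx)).1)
  rw [widthFn]
  linarith

lemma iInf_widthFn_slabBall (he : ‖e‖ = 1) (hω : 0 ≤ ω) (hδ : ω ≤ δ) :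
    ⨅ u : sphere (0 : EuclideanSpace ℝ (Fin n)) 1, widthFn (slabBall e δ ω) u = ω := by
  have hlow (u : sphere (0 : EuclideanSpace ℝ (Fin n)) 1) : ω ≤ widthFn (slabBall e δ ω) u := by
    linarith [le_widthFn isCompact_slabBall (by linarith) (closedBall_subset_slabBall he hδ)
      (mem_sphere_zero_iff_norm.1 u.2)]
  have : Nonempty (sphere (0 : EuclideanSpace ℝ (Fin n)) 1) :=
    ⟨⟨e, mem_sphere_zero_iff_norm.2 he⟩⟩
  refine le_antisymm (ciInf_le_of_le ⟨ω, Set.forall_mem_range.2 hlow⟩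
    ⟨e, mem_sphere_zero_iff_norm.2 he⟩ ?_) (le_ciInf hlow)
  linarith [widthFn_le ⟨0, closedBall_subset_slabBall he hδ (mem_closedBall_self (by linarith))⟩
    fun x hx => (mem_slabBall.1 hx).2]

lemma dirDiam_slabBall (hω : 0 < ω) (hδ : ω ≤ δ) (hu : ‖u‖ = 1) :
    dirDiam (slabBall e δ ω) u = ω / max |⟪u, e⟫| (ω / δ) := by
  have hδ₀ : 0 < δ := hω.trans_le hδ
  set m := max |⟪u, e⟫| (ω / δ)
  have hm : 0 < m := lt_max_of_lt_right (div_pos hω hδ₀)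
  have hmem : ∀ c : ℝ, |c| = ω / (2 * m) → c • u ∈ slabBall e δ ω := by
    intro c hc
    refine smul_mem_slabBall hu ?_ ?_ <;> rw [hc]
    · rw [div_le_iff₀ (mul_pos two_pos hm)]
      nlinarith [(div_le_iff₀ hδ₀).1 (le_max_right |⟪u, e⟫| (ω / δ))]
    · calc ω / (2 * m) * |⟪u, e⟫| ≤ ω / (2 * m) * m := by gcongr; exact le_max_left _ _
        _ = ω / 2 := by field_simp
  have hc : 0 < ω / (2 * m) := div_pos hω (mul_pos two_pos hm)
  refine IsGreatest.csSup_eq ⟨⟨(ω / (2 * m)) • u, hmem _ (abs_of_pos hc),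
    (-(ω / (2 * m))) • u, hmem _ (by rw [abs_neg, abs_of_pos hc]),
    ⟨ω / m, by rw [← sub_smul]; ring_nf⟩, ?_⟩, ?_⟩
  · rw [dist_eq_norm, ← sub_smul, norm_smul, hu, mul_one, Real.norm_of_nonneg (by linarith)]
    ring
  rintro _ ⟨x, hx, y, hy, ⟨t, hxy⟩, rfl⟩
  rw [mem_slabBall] at hx hy
  rw [dist_eq_norm, hxy, norm_smul, hu, mul_one, Real.norm_eq_abs, le_div_iff₀ hm,
    mul_max_of_nonneg _ _ (abs_nonneg t)]
  have hδ' : |t| ≤ δ := by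
    calc |t| = ‖x - y‖ := by rw [hxy, norm_smul, hu, mul_one, Real.norm_eq_abs]
      _ ≤ ‖x‖ + ‖y‖ := norm_sub_le x y
      _ ≤ δ := by linarith
  refine max_le ?_ ?_
  · calc |t| * |⟪u, e⟫| = |⟪x, e⟫ - ⟪y, e⟫| := by rw [← inner_sub_left, hxy, real_inner_smul_left, abs_mul]
      _ ≤ |⟪x, e⟫| + |⟪y, e⟫| := abs_sub _ _
      _ ≤ ω := by linarith
  · calc |t| * (ω / δ) ≤ δ * (ω / δ) := by gcongr
      _ = ω := by field_simp

lemma rho_rotVec (he : ‖e‖ = 1) (he' : ‖e'‖ = 1) (hee' : ⟪e, e'⟫ = 0) {θ φ : ℝ}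
    (h : |θ - φ| ≤ π / 2) : rho (rotVec e e' θ) (rotVec e e' φ) = |θ - φ| := by
  have hcos : 0 ≤ cos |θ - φ| :=
    cos_nonneg_of_mem_Icc ⟨by linarith [abs_nonneg (θ - φ), pi_pos], h⟩
  rw [rho, inner_rotVec he he' hee', ← cos_abs, abs_of_nonneg hcos,
    arccos_cos (abs_nonneg _) (by linarith [pi_pos])]

lemma rho_rotVec_left (he : ‖e‖ = 1) (he' : ‖e'‖ = 1) (hee' : ⟪e, e'⟫ = 0) {θ : ℝ}
    (hθ : θ ∈ Set.Icc 0 (π / 2)) : rho (rotVec e e' θ) e = θ := by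
  have h := rho_rotVec he he' hee' (φ := 0) (by rw [sub_zero, abs_of_nonneg hθ.1]; exact hθ.2)
  rwa [rotVec_zero, sub_zero, abs_of_nonneg hθ.1] at h

lemma eventually_rho_rotVec_pos (he : ‖e‖ = 1) (he' : ‖e'‖ = 1) (hee' : ⟪e, e'⟫ = 0) (θ₀ : ℝ) :
    ∀ᶠ θ in 𝓝[≠] θ₀, 0 < rho (rotVec e e' θ₀) (rotVec e e' θ) := by
  filter_upwards [self_mem_nhdsWithin,
    nhdsWithin_le_nhds (Metric.ball_mem_nhds θ₀ (half_pos pi_pos))] with θ hne hθ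
  rw [mem_ball, Real.dist_eq, abs_sub_comm] at hθ
  rw [rho_rotVec he he' hee' hθ.le]
  exact abs_pos.2 (sub_ne_zero.2 (Ne.symm hne))

end EuclideanSpace

section DirDiamSlabBall

variable {n : ℕ} {e e' u v : EuclideanSpace ℝ (Fin n)} {δ ω : ℝ}

lemma dirDiam_slabBall_eq_div_cos (he : ‖e‖ = 1) (hω : 0 < ω) (hδ : ω ≤ δ) (hu : ‖u‖ = 1) :
    dirDiam (slabBall e δ ω) u = ω / cos (min (rho u e) (arccos (ω / δ))) := by
  have hδ₀ : 0 < δ := hω.trans_le hδ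
  have hue : |⟪u, e⟫| ≤ 1 := by simpa [hu, he] using abs_real_inner_le_norm u e
  rw [dirDiam_slabBall hω hδ hu, rho, cos_min_arccos ⟨by linarith [abs_nonneg ⟪u, e⟫], hue⟩
    ⟨by linarith [div_pos hω hδ₀], (div_le_one hδ₀).2 hδ⟩]

lemma abs_dirDiam_slabBall_sub_le (he : ‖e‖ = 1) (hω : 0 < ω) (hδ : ω ≤ δ) (hu : ‖u‖ = 1)
    (hv : ‖v‖ = 1) :
    |dirDiam (slabBall e δ ω) u - dirDiam (slabBall e δ ω) v| ≤
      δ / ω * √(δ ^ 2 - ω ^ 2) * rho u v := by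
  rw [dirDiam_slabBall_eq_div_cos he hω hδ hu, dirDiam_slabBall_eq_div_cos he hω hδ hv]
  exact (abs_div_cos_min_sub_le hω hδ (arccos_nonneg _) (arccos_nonneg _)).trans
    (mul_le_mul_of_nonneg_left (abs_rho_sub_rho_le hu hv he)
      (mul_nonneg (div_nonneg (hω.le.trans hδ) hω.le) (sqrt_nonneg _)))

lemma tendsto_dirDiam_slabBall_rotVec (he : ‖e‖ = 1) (he' : ‖e'‖ = 1) (hee' : ⟪e, e'⟫ = 0)
    (hω : 0 < ω) (hδ : ω < δ) :
    Tendsto (fun θ => |dirDiam (slabBall e δ ω) (rotVec e e' (arccos (ω / δ))) -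
        dirDiam (slabBall e δ ω) (rotVec e e' θ)| /
          rho (rotVec e e' (arccos (ω / δ))) (rotVec e e' θ))
      (𝓝[<] arccos (ω / δ)) (𝓝 (δ / ω * √(δ ^ 2 - ω ^ 2))) := by
  have hδ₀ : 0 < δ := hω.trans hδ
  set θ₁ := arccos (ω / δ)
  have hθ₁ : 0 < θ₁ := arccos_pos.2 ((div_lt_one hδ₀).2 hδ)
  have hθ₁' : θ₁ ≤ π / 2 := arccos_le_pi_div_two.2 (div_pos hω hδ₀).le
  set f := fun θ => ω / cos θ
  have hslope : Tendsto (fun θ => |slope f θ₁ θ|) (𝓝[<] θ₁) (𝓝 (δ / ω * √(δ ^ 2 - ω ^ 2))) := by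
    have hcos : cos θ₁ ≠ 0 := by
      rw [cos_arccos (by linarith [div_pos hω hδ₀]) ((div_le_one hδ₀).2 hδ.le)]
      positivity
    have h := (hasDerivAt_div_cos ω hcos).tendsto_slope.abs
    rw [div_cos_deriv_arccos hω hδ.le, abs_of_nonneg (by positivity)] at h
    exact h.mono_left (nhdsLT_le_nhdsNE θ₁)
  have hrot : ∀ θ ∈ Set.Icc 0 θ₁, dirDiam (slabBall e δ ω) (rotVec e e' θ) = f θ := fun θ hθ => by
    rw [dirDiam_slabBall_eq_div_cos he hω hδ.le (norm_rotVec he he' hee' θ),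
      rho_rotVec_left he he' hee' ⟨hθ.1, hθ.2.trans hθ₁'⟩, min_eq_left hθ.2]
  refine hslope.congr' ?_
  filter_upwards [Ioo_mem_nhdsLT hθ₁] with θ hθ
  have hθθ₁ : |θ₁ - θ| = θ₁ - θ := abs_of_pos (sub_pos.2 hθ.2)
  rw [hrot θ₁ ⟨hθ₁.le, le_rfl⟩, hrot θ ⟨hθ.1.le, hθ.2.le⟩,
    rho_rotVec he he' hee' (by rw [hθθ₁]; linarith [hθ.1]), slope_def_field, abs_div,
    abs_sub_comm (f θ), abs_sub_comm θ]

def dirDiamQuotients (K : Set (EuclideanSpace ℝ (Fin n))) : Set ℝ :=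
  {q | ∃ u v : EuclideanSpace ℝ (Fin n), ‖u‖ = 1 ∧ ‖v‖ = 1 ∧ u ≠ v ∧ u ≠ -v ∧
    q = |dirDiam K u - dirDiam K v| / rho u v}

lemma dirDiamQuotients_slabBall_le (he : ‖e‖ = 1) (hω : 0 < ω) (hδ : ω ≤ δ) :
    ∀ q ∈ dirDiamQuotients (slabBall e δ ω), q ≤ δ / ω * √(δ ^ 2 - ω ^ 2) := by
  rintro _ ⟨u, v, hu, hv, huv, huv', rfl⟩
  rw [div_le_iff₀ ((rho_pos_iff hu hv).2 ⟨huv, huv'⟩)]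
  exact abs_dirDiam_slabBall_sub_le he hω hδ hu hv

lemma sSup_dirDiamQuotients_slabBall (he : ‖e‖ = 1) (he' : ‖e'‖ = 1) (hee' : ⟪e, e'⟫ = 0)
    (hω : 0 < ω) (hδ : ω ≤ δ) :
    sSup (dirDiamQuotients (slabBall e δ ω)) = δ / ω * √(δ ^ 2 - ω ^ 2) := by
  have hub := dirDiamQuotients_slabBall_le he hω hδ
  refine le_antisymm (Real.sSup_le hub
    (mul_nonneg (div_nonneg (hω.le.trans hδ) hω.le) (sqrt_nonneg _))) ?_
  rcases hδ.eq_or_lt with rfl | hlt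
  · rw [sub_self, sqrt_zero, mul_zero]
    exact Real.sSup_nonneg fun _ ⟨u, v, _, _, _, _, hq⟩ =>
      hq ▸ div_nonneg (abs_nonneg _) (arccos_nonneg _)
  refine le_of_tendsto (tendsto_dirDiam_slabBall_rotVec he he' hee' hω hlt) ?_
  filter_upwards [(eventually_rho_rotVec_pos he he' hee' _).filter_mono (nhdsLT_le_nhdsNE _)]
    with θ hρ
  have hu := norm_rotVec he he' hee' (arccos (ω / δ))
  have hv := norm_rotVec he he' hee' θ
  obtain ⟨huv, huv'⟩ := (rho_pos_iff hu hv).1 hρ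
  exact le_csSup ⟨_, hub⟩ ⟨_, _, hu, hv, huv, huv', rfl⟩

end DirDiamSlabBall

theorem dirDiam_lipschitz_constant_optimal {n : ℕ} (hn : 2 ≤ n) (δ ω : ℝ)
    (hω : 0 < ω) (hδ : ω ≤ δ) :
    ∃ K : Set (EuclideanSpace ℝ (Fin n)),
      IsCompact K ∧ Convex ℝ K ∧ (interior K).Nonempty ∧
      Metric.diam K = δ ∧
      (⨅ u : sphere (0 : EuclideanSpace ℝ (Fin n)) 1, widthFn K u) = ω ∧
      sSup {q : ℝ | ∃ u v : EuclideanSpace ℝ (Fin n), ‖u‖ = 1 ∧ ‖v‖ = 1 ∧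
          u ≠ v ∧ u ≠ -v ∧ q = |dirDiam K u - dirDiam K v| / rho u v} =
        (δ / ω) * Real.sqrt (δ ^ 2 - ω ^ 2) := by
  set e : EuclideanSpace ℝ (Fin n) := EuclideanSpace.single ⟨0, by omega⟩ 1
  set e' : EuclideanSpace ℝ (Fin n) := EuclideanSpace.single ⟨1, by omega⟩ 1
  have he : ‖e‖ = 1 := by simp [e]
  have he' : ‖e'‖ = 1 := by simp [e']
  have hee' : ⟪e, e'⟫ = 0 := by simp [e, e', EuclideanSpace.inner_single_left]
  exact ⟨slabBall e δ ω, isCompact_slabBall, convex_slabBall,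
    interior_slabBall_nonempty he hω hδ,
    diam_slabBall he' (by rw [real_inner_comm, hee']) hω.le (hω.le.trans hδ),
    iInf_widthFn_slabBall he hω.le hδ, sSup_dirDiamQuotients_slabBall he he' hee' hω hδ⟩
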